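/- Let z be a positive integer, 0 < ε < 1/2, and d, k be positive integers, and let P = {e_1, …, e_d} ⊂ ℝ^{2d}. Suppose r_1, …, r_t ∈ ℝ^{2d} with weights w_1, …, w_t ∈ ℝ_{>0} and offset Δ ∈ ℝ form an ε-coreset with offset for (k,z)-clustering on P, and t < d. Then |Δ + ∑_{i=1}^t w_i·(‖r_i‖² + 1)^{z/2} − 2^{z/2}·d| ≤ ε·2^{z/2}·d. -/

import Mathlib

/-- The `i`-th standard basis vector of `ℝ^{2d}` (for `i < d`). -/
noncomputable def stdBasisPt (d : ℕ) (i : Fin d) : EuclideanSpace ℝ (Fin (2 * d)) :=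
  EuclideanSpace.single (Fin.castLE (by omega) i) 1

/-- The `(k,z)`-clustering cost of `P = {e_1, …, e_d} ⊂ ℝ^{2d}` in the set of centers `S`:
`cost(P, S) = ∑_{i} min_{s ∈ S} ‖e_i − s‖^z`. -/
noncomputable def kzCostP (z d : ℕ) (S : Finset (EuclideanSpace ℝ (Fin (2 * d)))) : ℝ :=
  ∑ i : Fin d, ⨅ s : S, ‖stdBasisPt d i - (s : EuclideanSpace ℝ (Fin (2 * d)))‖ ^ z

/-- `r, w, Δ` form an `ε`-coreset with offset for `(k,z)`-clustering on
`P = {e_1,…,e_d} ⊂ ℝ^{2d}`. -/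
def IsKZCoreset (z d k t : ℕ) (ε : ℝ) (r : Fin t → EuclideanSpace ℝ (Fin (2 * d)))
    (w : Fin t → ℝ) (Δ : ℝ) : Prop :=
  ∀ S : Finset (EuclideanSpace ℝ (Fin (2 * d))), S.card = k →
    |kzCostP z d S -
        (Δ + ∑ i, w i * ⨅ s : S, ‖r i - (s : EuclideanSpace ℝ (Fin (2 * d)))‖ ^ z)| ≤
      ε * kzCostP z d S

/-! Take a unit vector `u` orthogonal to all `eᵢ` and all `rⱼ` (these `d + t < 2d` vectors span a
proper subspace of `ℝ^{2d}`) and the `k` centers `u, 2u, …, ku`. For `p ⊥ u` the center `c • u` is at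
squared distance `‖p‖² + c²`, so `u` is nearest. Hence `cost(P, S) = 2^{z/2} d` and the coreset cost
is `Δ + ∑ wᵢ (‖rᵢ‖² + 1)^{z/2}`. -/

open RealInnerProductSpace

theorem pow_eq_sq_rpow_half {a : ℝ} (ha : 0 ≤ a) (z : ℕ) : a ^ z = (a ^ 2) ^ ((z : ℝ) / 2) := by
  rw [← Real.rpow_natCast, ← Real.rpow_natCast a 2, ← Real.rpow_mul ha]
  ring_nf

section OrthogonalRay

variable {E : Type*} [NormedAddCommGroup E] [InnerProductSpace ℝ E]

theorem exists_norm_eq_one_forall_inner_eq_zero [FiniteDimensional ℝ E] {ι : Type*} [Fintype ι]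
    (f : ι → E) (hcard : Fintype.card ι < Module.finrank ℝ E) :
    ∃ u : E, ‖u‖ = 1 ∧ ∀ i, ⟪f i, u⟫ = 0 := by
  set W := Submodule.span ℝ (Set.range f)
  have hW : Module.finrank ℝ W ≤ Fintype.card ι := finrank_range_le_card f
  have hWperp : Wᗮ ≠ ⊥ := by
    intro h
    have := W.finrank_add_finrank_orthogonal
    rw [h, finrank_bot] at this
    omega
  obtain ⟨v, hvW, hv0⟩ := Submodule.exists_mem_ne_zero_of_ne_bot hWperp
  refine ⟨‖v‖⁻¹ • v, norm_smul_inv_norm hv0, fun i => ?_⟩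
  rw [real_inner_smul_right, (W.mem_orthogonal v).mp hvW _ (Submodule.subset_span ⟨i, rfl⟩),
    mul_zero]

theorem norm_sub_smul_sq_of_inner_eq_zero {p u : E} (hu : ‖u‖ = 1) (hpu : ⟪p, u⟫ = 0) (c : ℝ) :
    ‖p - c • u‖ ^ 2 = ‖p‖ ^ 2 + c ^ 2 := by
  rw [norm_sub_sq_real, real_inner_smul_right, hpu, norm_smul, hu, Real.norm_eq_abs, mul_one,
    sq_abs]
  ring

variable [DecidableEq E]

noncomputable def rayCenters (u : E) (k : ℕ) : Finset E :=
  (Finset.range k).image fun j : ℕ => ((j : ℝ) + 1) • u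

theorem card_rayCenters {u : E} (hu : u ≠ 0) (k : ℕ) : (rayCenters u k).card = k := by
  rw [rayCenters, Finset.card_image_of_injective _ ?_, Finset.card_range]
  intro i j hij
  exact Nat.cast_injective (add_right_cancel (smul_left_injective ℝ hu hij))

theorem iInf_rayCenters_norm_sub_pow {p u : E} (hu : ‖u‖ = 1) (hpu : ⟪p, u⟫ = 0) {k : ℕ}
    (hk : 0 < k) (z : ℕ) :
    ⨅ s : rayCenters u k, ‖p - (s : E)‖ ^ z = (‖p‖ ^ 2 + 1) ^ ((z : ℝ) / 2) := by
  have hu_mem : u ∈ rayCenters u k :=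
    Finset.mem_image.mpr ⟨0, Finset.mem_range.mpr hk, by simp⟩
  have hdist : ∀ c : ℝ, ‖p - c • u‖ ^ z = (‖p‖ ^ 2 + c ^ 2) ^ ((z : ℝ) / 2) := fun c => by
    rw [pow_eq_sq_rpow_half (norm_nonneg _), norm_sub_smul_sq_of_inner_eq_zero hu hpu]
  apply le_antisymm
  · calc ⨅ s : rayCenters u k, ‖p - (s : E)‖ ^ z ≤ ‖p - (1 : ℝ) • u‖ ^ z := by
          rw [one_smul]
          exact ciInf_le (Set.finite_range _).bddBelow (⟨u, hu_mem⟩ : rayCenters u k)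
      _ = (‖p‖ ^ 2 + 1) ^ ((z : ℝ) / 2) := by rw [hdist, one_pow]
  · have : Nonempty (rayCenters u k) := ⟨⟨u, hu_mem⟩⟩
    refine le_ciInf fun ⟨s, hs⟩ => ?_
    obtain ⟨j, -, rfl⟩ := Finset.mem_image.mp hs
    rw [hdist]
    have hj : (1 : ℝ) ≤ (j : ℝ) + 1 := le_add_of_nonneg_left j.cast_nonneg
    gcongr
    exact one_le_pow₀ hj

end OrthogonalRay

theorem norm_stdBasisPt (d : ℕ) (i : Fin d) : ‖stdBasisPt d i‖ = 1 := by
  rw [stdBasisPt, PiLp.norm_single, norm_one]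

theorem kz_coreset_offset_norm_sum_general
    (z : ℕ) (d k t : ℕ) (hk : 0 < k)
    (ε : ℝ)
    (r : Fin t → EuclideanSpace ℝ (Fin (2 * d))) (w : Fin t → ℝ)
    (Δ : ℝ)
    (hcore : IsKZCoreset z d k t ε r w Δ) (ht : t < d) :
    |Δ + (∑ i, w i * (‖r i‖ ^ 2 + 1) ^ ((z : ℝ) / 2)) - (2 : ℝ) ^ ((z : ℝ) / 2) * d| ≤
      ε * (2 : ℝ) ^ ((z : ℝ) / 2) * d := by
  obtain ⟨u, hu, horth⟩ := exists_norm_eq_one_forall_inner_eq_zero (Sum.elim (stdBasisPt d) r)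
    (by simp only [Fintype.card_sum, Fintype.card_fin, finrank_euclideanSpace_fin]; omega)
  have hcenter (p) (hpu : ⟪p, u⟫ = 0) := iInf_rayCenters_norm_sub_pow hu hpu hk z
  have hP (i) : ⟪stdBasisPt d i, u⟫ = 0 := horth (.inl i)
  have hR (i) : ⟪r i, u⟫ = 0 := horth (.inr i)
  have hcost : kzCostP z d (rayCenters u k) = (2 : ℝ) ^ ((z : ℝ) / 2) * d := by
    simp only [kzCostP, fun i => hcenter _ (hP i), norm_stdBasisPt]
    norm_num [mul_comm]
  have hS := hcore (rayCenters u k) (card_rayCenters (norm_ne_zero_iff.mp (hu ▸ one_ne_zero)) k)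
  simp only [hcost, fun i => hcenter _ (hR i)] at hS
  rw [abs_sub_comm, mul_assoc]
  exact hS

/-- for an `ε`-coreset with offset for `(k,z)`-clustering of `{e_1,…,e_d}`
with `t < d` points, `Δ + ∑ wᵢ(‖rᵢ‖²+1)^{z/2}` lies within `ε·2^{z/2}·d` of `2^{z/2}·d`. -/
theorem kz_coreset_offset_norm_sum
    (z : ℕ) (hz : 0 < z) (d k t : ℕ) (hd : 0 < d) (hk : 0 < k)
    (ε : ℝ) (hε0 : 0 < ε) (hε : ε < 1 / 2)
    (r : Fin t → EuclideanSpace ℝ (Fin (2 * d))) (w : Fin t → ℝ)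
    (hw : ∀ i, 0 < w i) (Δ : ℝ)
    (hcore : IsKZCoreset z d k t ε r w Δ) (ht : t < d) :
    |Δ + (∑ i, w i * (‖r i‖ ^ 2 + 1) ^ ((z : ℝ) / 2)) - (2 : ℝ) ^ ((z : ℝ) / 2) * d| ≤
      ε * (2 : ℝ) ^ ((z : ℝ) / 2) * d :=
  kz_coreset_offset_norm_sum_general z d k t hk ε r w Δ hcore ht
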